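/- arXiv:1912.05438 — 2 statements merged into one kernel-verified Lean document; each statement's English description precedes it below -/
import Mathlib

section
/- The function f(x) = e^{x²/2} N(x) is strictly increasing on ℝ, tends to 0 as x → −∞, and tends to +∞ as x → +∞; consequently, for every real c > 0 there exists a unique real x with e^{x²/2} N(x) = c. -/
open MeasureTheory Real Set Filter

/-- Standard normal cdf `N(x)`. -/
noncomputable def stdCdf (x : ℝ) : ℝ := ∫ y in Set.Iic x, Real.exp (-y ^ 2 / 2) / Real.sqrt (2 * Real.pi)

/-!
With `φ = N'` the standard normal density, `φ'(y) = -y φ(y)` gives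
`x N(x) + φ(x) = ∫_{-∞}^x (x - y) φ(y) dy > 0`, and the derivative of `e^{x²/2} N(x)` is
`e^{x²/2} (x N(x) + φ(x))`, so the function is strictly increasing. For `x < 0` the same
inequality reads `-x N(x) < φ(x) = e^{-x²/2} / √(2π)`, whence `0 < e^{x²/2} N(x) < 1 / (√(2π) |x|)`;
for `x ≥ 0` it is at least `N(0) e^{x²/2}`.
-/

open ProbabilityTheory Topology

noncomputable def stdPdf (y : ℝ) : ℝ := Real.exp (-y ^ 2 / 2) / Real.sqrt (2 * Real.pi)

lemma stdPdf_eq_gaussianPDFReal : stdPdf = gaussianPDFReal 0 1 := by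
  ext y
  simp [stdPdf, gaussianPDFReal, div_eq_inv_mul]

lemma stdPdf_pos (y : ℝ) : 0 < stdPdf y := by
  unfold stdPdf; positivity

lemma integrable_stdPdf : Integrable stdPdf := by
  simpa only [stdPdf_eq_gaussianPDFReal] using integrable_gaussianPDFReal 0 1

lemma integrable_mul_stdPdf : Integrable fun y => y * stdPdf y := by
  refine ((integrable_mul_exp_neg_mul_sq (b := 1 / 2) (by norm_num)).div_const √(2 * π)).congr
    (ae_of_all _ fun y => ?_)
  simp only [stdPdf]
  ring_nf

lemma continuous_stdPdf : Continuous stdPdf := by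
  unfold stdPdf; fun_prop

lemma hasDerivAt_stdPdf (y : ℝ) : HasDerivAt stdPdf (-y * stdPdf y) y := by
  have := (((hasDerivAt_pow 2 y).fun_neg.div_const 2).exp).div_const √(2 * π)
  refine this.congr_deriv ?_
  simp only [stdPdf]
  push_cast
  ring

lemma exp_sq_div_two_mul_stdPdf (x : ℝ) : exp (x ^ 2 / 2) * stdPdf x = (√(2 * π))⁻¹ := by
  rw [stdPdf, mul_div_assoc', ← exp_add, neg_div, add_neg_cancel, exp_zero, one_div]

lemma tendsto_exp_sq_div_two_cocompact :
    Tendsto (fun x : ℝ => exp (x ^ 2 / 2)) (cocompact ℝ) atTop := by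
  refine tendsto_exp_atTop.comp <| Tendsto.atTop_div_const two_pos ?_
  simpa only [Function.comp_def, norm_eq_abs, sq_abs] using
    (tendsto_pow_atTop two_ne_zero).comp (tendsto_norm_cocompact_atTop (E := ℝ))

lemma tendsto_stdPdf_atBot : Tendsto stdPdf atBot (𝓝 0) := by
  have h := (tendsto_exp_sq_div_two_cocompact.mono_left atBot_le_cocompact).inv_tendsto_atTop
    |>.const_mul (√(2 * π))⁻¹
  rw [mul_zero] at h
  refine h.congr fun x => ?_
  rw [← exp_sq_div_two_mul_stdPdf x, Pi.inv_apply]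
  field_simp

lemma stdCdf_eq_integral_stdPdf (x : ℝ) : stdCdf x = ∫ y in Iic x, stdPdf y := rfl

lemma stdCdf_pos (x : ℝ) : 0 < stdCdf x := by
  rw [stdCdf_eq_integral_stdPdf, setIntegral_pos_iff_support_of_nonneg_ae
    (ae_of_all _ fun y => (stdPdf_pos y).le) integrable_stdPdf.integrableOn]
  simp [Function.support_eq_univ fun y => (stdPdf_pos y).ne']

lemma monotone_stdCdf : Monotone stdCdf := fun _ _ hxy =>
  setIntegral_mono_set integrable_stdPdf.integrableOn (ae_of_all _ fun z => (stdPdf_pos z).le)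
    (Iic_subset_Iic.2 hxy).eventuallyLE

lemma hasDerivAt_stdCdf (x : ℝ) : HasDerivAt stdCdf (stdPdf x) x := by
  have h := (intervalIntegral.integral_hasDerivAt_right (a := 0) (b := x) integrable_stdPdf.intervalIntegrable
    continuous_stdPdf.aestronglyMeasurable.stronglyMeasurableAtFilter
    continuous_stdPdf.continuousAt).const_add (stdCdf 0)
  refine h.congr_of_eventuallyEq (Eventually.of_forall fun u => ?_)
  dsimp only
  rw [← intervalIntegral.integral_Iic_sub_Iic integrable_stdPdf.integrableOn
    integrable_stdPdf.integrableOn, stdCdf_eq_integral_stdPdf, stdCdf_eq_integral_stdPdf]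
  ring

lemma setIntegral_Iic_mul_stdPdf (x : ℝ) : ∫ y in Iic x, y * stdPdf y = -stdPdf x := by
  have hderiv (y : ℝ) : HasDerivAt (fun y => -stdPdf y) (y * stdPdf y) y := by
    simpa using (hasDerivAt_stdPdf y).fun_neg
  simpa using integral_Iic_of_hasDerivAt_of_tendsto (hderiv x).continuousAt.continuousWithinAt
    (fun y _ => hderiv y) integrable_mul_stdPdf.integrableOn tendsto_stdPdf_atBot.neg

lemma setIntegral_Iic_sub_mul_stdPdf (x : ℝ) :
    ∫ y in Iic x, (x - y) * stdPdf y = x * stdCdf x + stdPdf x := by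
  simp_rw [sub_mul]
  rw [integral_sub (integrable_stdPdf.const_mul x).integrableOn integrable_mul_stdPdf.integrableOn,
    integral_const_mul, setIntegral_Iic_mul_stdPdf, stdCdf_eq_integral_stdPdf, sub_neg_eq_add]

lemma mul_stdCdf_add_stdPdf_pos (x : ℝ) : 0 < x * stdCdf x + stdPdf x := by
  have hint : Integrable fun y => (x - y) * stdPdf y := by
    simp_rw [sub_mul]
    exact (integrable_stdPdf.const_mul x).sub integrable_mul_stdPdf
  rw [← setIntegral_Iic_sub_mul_stdPdf, setIntegral_pos_iff_support_of_nonneg_ae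
    ((ae_restrict_iff' measurableSet_Iic).2 (ae_of_all _ fun y hy =>
      mul_nonneg (sub_nonneg.2 hy) (stdPdf_pos y).le)) hint.integrableOn]
  refine (measure_mono fun y (hy : y < x) => ?_).trans_lt' (by simp : 0 < volume (Iio x))
  exact ⟨(mul_pos (sub_pos.2 hy) (stdPdf_pos y)).ne', hy.le⟩

noncomputable def expSqMulStdCdf (x : ℝ) : ℝ := exp (x ^ 2 / 2) * stdCdf x

lemma hasDerivAt_expSqMulStdCdf (x : ℝ) :
    HasDerivAt expSqMulStdCdf (exp (x ^ 2 / 2) * (x * stdCdf x + stdPdf x)) x := by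
  have hexp := ((hasDerivAt_pow 2 x).div_const 2).exp
  refine (hexp.mul (hasDerivAt_stdCdf x)).congr_deriv ?_
  push_cast
  ring

lemma continuous_expSqMulStdCdf : Continuous expSqMulStdCdf :=
  continuous_iff_continuousAt.2 fun x => (hasDerivAt_expSqMulStdCdf x).continuousAt

lemma strictMono_expSqMulStdCdf : StrictMono expSqMulStdCdf :=
  strictMono_of_deriv_pos fun x => (hasDerivAt_expSqMulStdCdf x).deriv ▸
    mul_pos (exp_pos _) (mul_stdCdf_add_stdPdf_pos x)

lemma expSqMulStdCdf_pos (x : ℝ) : 0 < expSqMulStdCdf x :=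
  mul_pos (exp_pos _) (stdCdf_pos x)

lemma expSqMulStdCdf_le_of_neg {x : ℝ} (hx : x < 0) :
    expSqMulStdCdf x ≤ (√(2 * π))⁻¹ / -x := by
  rw [le_div_iff₀ (neg_pos.2 hx), ← exp_sq_div_two_mul_stdPdf x, expSqMulStdCdf, mul_assoc]
  gcongr
  linarith [mul_stdCdf_add_stdPdf_pos x]

lemma tendsto_expSqMulStdCdf_atBot : Tendsto expSqMulStdCdf atBot (𝓝 0) := by
  refine tendsto_of_tendsto_of_tendsto_of_le_of_le' tendsto_const_nhds
    ((tendsto_const_nhds (x := (√(2 * π))⁻¹)).div_atTop tendsto_neg_atBot_atTop)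
    (Eventually.of_forall fun x => (expSqMulStdCdf_pos x).le) ?_
  filter_upwards [eventually_lt_atBot 0] with x hx using expSqMulStdCdf_le_of_neg hx

lemma tendsto_expSqMulStdCdf_atTop : Tendsto expSqMulStdCdf atTop atTop := by
  refine tendsto_atTop_mono' atTop ?_ <|
    (tendsto_exp_sq_div_two_cocompact.mono_left atTop_le_cocompact).atTop_mul_const (stdCdf_pos 0)
  filter_upwards [eventually_ge_atTop 0] with x hx
  exact mul_le_mul_of_nonneg_left (monotone_stdCdf hx) (exp_pos _).le

theorem exp_sq_mul_cdf_bijective :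
    StrictMono (fun x : ℝ => Real.exp (x ^ 2 / 2) * stdCdf x) ∧
    Tendsto (fun x : ℝ => Real.exp (x ^ 2 / 2) * stdCdf x) atBot (nhds 0) ∧
    Tendsto (fun x : ℝ => Real.exp (x ^ 2 / 2) * stdCdf x) atTop atTop ∧
    ∀ c : ℝ, 0 < c → ∃! x : ℝ, Real.exp (x ^ 2 / 2) * stdCdf x = c := by
  refine ⟨strictMono_expSqMulStdCdf, tendsto_expSqMulStdCdf_atBot, tendsto_expSqMulStdCdf_atTop,
    fun c hc => ?_⟩
  obtain ⟨a, ha⟩ := (tendsto_expSqMulStdCdf_atBot.eventually_lt_const hc).exists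
  obtain ⟨b, hb⟩ := (tendsto_expSqMulStdCdf_atTop.eventually_gt_atTop c).exists
  obtain ⟨x, hx⟩ := intermediate_value_univ a b continuous_expSqMulStdCdf ⟨ha.le, hb.le⟩
  exact ⟨x, hx, fun y hy => strictMono_expSqMulStdCdf.injective (hy.trans hx.symm)⟩
end

section
/- (Linear Volterra equation for the time-dependent strike, general m.) Fix m ∈ ℝ, set γ = m + r − σ²/2 and b(t) = K_T·e^{−γ(T−t)}. Let K : [0,T] → ℝ be continuous with K(T) = K_T, continuously differentiable on [0,T), and such that u ↦ e^{−ru}·K′(u) is integrable on (0,T). Then the following are equivalent: (i) for every t ∈ [0,T), K(t) − b(t) = V^e(t, b(t)) + ∫_t^T e^{−r(u−t)}·(r·K(u) − K′(u))·N((m/σ)·√(u−t)) du; (ii) for every t ∈ [0,T), K(t) = 2·K_T·e^{−(m + r − σ²/2)(T−t)}·N(−(m/σ − σ)·√(T−t)) + (m/(σ·√(2π)))·∫_t^T e^{−(r + m²/(2σ²))(u−t)}·K(u)·(u−t)^{−1/2} du. Here V^e(t,x) = K_T·e^{−r(T−t)}·N( (log(K_T/x) − (r − σ²/2)(T−t))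 / (σ√(T−t)) ) − x·N( (log(K_T/x) − (r + σ²/2)(T−t)) / (σ√(T−t)) ) for x > 0. -/
/-!
Integrating `e^{-r(u-t)} (r K(u) - K'(u)) N((m/σ)√(u-t))` by parts, with antiderivative
`-e^{-r(u-t)} K(u) N((m/σ)√(u-t))`, produces the boundary terms `K(t)/2` and
`e^{-r(T-t)} K_T N((m/σ)√(T-t))` and, from the derivative of `N((m/σ)√(u-t))`, the weakly singular
kernel of (ii). At `x = b(t)` the log-moneyness `log(K_T/x)` equals `γ(T-t)`, so `V^e(t, b(t))`
is explicit; after `N(-x) = 1 - N(x)` both equations say the same linear identity.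
-/

open MeasureTheory Real Set Filter

/-- European put value with strike `K_T` under Black–Scholes. -/
noncomputable def VeStrike (r σ T KT t x : ℝ) : ℝ :=
  KT * Real.exp (-r * (T - t)) *
    stdCdf ((Real.log (KT / x) - (r - σ ^ 2 / 2) * (T - t)) / (σ * Real.sqrt (T - t)))
  - x * stdCdf ((Real.log (KT / x) - (r + σ ^ 2 / 2) * (T - t)) / (σ * Real.sqrt (T - t)))

/-- Exercise boundary `b(t) = K_T·e^{−γ(T−t)}` with `γ = m + r − σ²/2`. -/
noncomputable def bndStrikeM (m r σ T KT t : ℝ) : ℝ :=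
  KT * Real.exp (-(m + r - σ ^ 2 / 2) * (T - t))

open ProbabilityTheory

lemma gaussianPDFReal_zero_one (y : ℝ) :
    gaussianPDFReal 0 1 y = exp (-y ^ 2 / 2) / √(2 * π) := by
  simp [gaussianPDFReal, div_eq_inv_mul]

lemma stdCdf_eq_setIntegral_gaussianPDFReal (x : ℝ) :
    stdCdf x = ∫ y in Iic x, gaussianPDFReal 0 1 y := by
  simp only [stdCdf, gaussianPDFReal_zero_one]

lemma stdCdf_neg (x : ℝ) : stdCdf (-x) = 1 - stdCdf x := by
  have hIoi : stdCdf (-x) = ∫ y in Ioi x, gaussianPDFReal 0 1 y := by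
    rw [stdCdf_eq_setIntegral_gaussianPDFReal, ← integral_comp_neg_Ioi]
    simp [gaussianPDFReal]
  rw [hIoi, stdCdf_eq_setIntegral_gaussianPDFReal, eq_sub_iff_add_eq',
    ← integral_gaussianPDFReal_eq_one 0 one_ne_zero, ← compl_Iic,
    integral_add_compl measurableSet_Iic (integrable_gaussianPDFReal 0 1)]

lemma stdCdf_zero : stdCdf 0 = 1 / 2 := by
  have h := stdCdf_neg 0
  rw [neg_zero] at h
  linarith

lemma hasDerivAt_stdCdf_s19 (x : ℝ) : HasDerivAt stdCdf (exp (-x ^ 2 / 2) / √(2 * π)) x := by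
  have hint : Integrable (gaussianPDFReal 0 1) := integrable_gaussianPDFReal 0 1
  have hcont : Continuous (gaussianPDFReal 0 1) := by
    simp only [gaussianPDFReal_def]; fun_prop
  have hFTC : stdCdf = fun z => stdCdf 0 + ∫ y in (0 : ℝ)..z, gaussianPDFReal 0 1 y := by
    ext z
    rw [stdCdf_eq_setIntegral_gaussianPDFReal, stdCdf_eq_setIntegral_gaussianPDFReal,
      ← intervalIntegral.integral_Iic_sub_Iic hint.integrableOn hint.integrableOn]
    ring
  rw [hFTC, ← gaussianPDFReal_zero_one]
  exact (intervalIntegral.integral_hasDerivAt_right hint.intervalIntegrable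
    (hcont.stronglyMeasurableAtFilter _ _) hcont.continuousAt).const_add _

lemma continuous_stdCdf : Continuous stdCdf :=
  continuous_iff_continuousAt.2 fun x => (hasDerivAt_stdCdf_s19 x).continuousAt

lemma hasDerivAt_stdCdf_mul_sqrt_sub (c : ℝ) {a u : ℝ} (hu : a < u) :
    HasDerivAt (fun v => stdCdf (c * √(v - a)))
      (c * exp (-c ^ 2 * (u - a) / 2) / (2 * √(2 * π) * √(u - a))) u := by
  have hsqrt : HasDerivAt (fun v => √(v - a)) (1 / (2 * √(u - a))) u :=
    ((hasDerivAt_id u).sub_const a).sqrt (sub_pos.2 hu).ne'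
  refine ((hasDerivAt_stdCdf_s19 _).comp u (hsqrt.const_mul c)).congr_deriv ?_
  rw [mul_pow, sq_sqrt (sub_pos.2 hu).le]
  field_simp

lemma intervalIntegrable_div_sqrt_sub {g : ℝ → ℝ} {a b : ℝ} (hab : a ≤ b)
    (hg : ContinuousOn g (Icc a b)) :
    IntervalIntegrable (fun u => g u / √(u - a)) volume a b := by
  have hpow : IntervalIntegrable (fun u => (u - a) ^ (-(1 / 2) : ℝ)) volume a b := by
    simpa using (intervalIntegral.intervalIntegrable_rpow' (a := 0) (b := b - a)
      (by norm_num : (-1 : ℝ) < -(1 / 2))).comp_sub_right a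
  refine (hpow.continuousOn_mul (uIcc_of_le hab ▸ hg)).congr ?_
  intro u _
  dsimp only
  rw [rpow_neg_eq_inv_rpow, ← sqrt_eq_rpow, sqrt_inv, div_eq_mul_inv]

lemma IntervalIntegrable.of_exp_mul {f : ℝ → ℝ} {a b c : ℝ}
    (h : IntervalIntegrable (fun u => exp (c * u) * f u) volume a b) :
    IntervalIntegrable f volume a b := by
  refine (h.continuousOn_mul (g := fun u => exp (-c * u)) (by fun_prop)).congr ?_
  intro u _
  dsimp only
  rw [← mul_assoc, ← exp_add]
  simp

section IntegrationByParts

variable {K K' : ℝ → ℝ} {r c t T : ℝ}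

lemma hasDerivAt_exp_mul_stdCdf_mul_sqrt_sub {u : ℝ} (hu : t < u) (hK : HasDerivAt K (K' u) u) :
    HasDerivAt (fun v => exp (-r * (v - t)) * K v * stdCdf (c * √(v - t)))
      (c / (2 * √(2 * π)) * (exp (-(r + c ^ 2 / 2) * (u - t)) * K u / √(u - t))
        - exp (-r * (u - t)) * (r * K u - K' u) * stdCdf (c * √(u - t))) u := by
  have hexp : HasDerivAt (fun v => exp (-r * (v - t))) (exp (-r * (u - t)) * (-r)) u := by
    simpa using (((hasDerivAt_id u).sub_const t).const_mul (-r)).exp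
  refine ((hexp.mul hK).mul (hasDerivAt_stdCdf_mul_sqrt_sub c hu)).congr_deriv ?_
  have hsplit :
      exp (-(r + c ^ 2 / 2) * (u - t)) = exp (-r * (u - t)) * exp (-c ^ 2 * (u - t) / 2) := by
    rw [← exp_add]
    ring_nf
  rw [hsplit]
  simp only [Pi.mul_apply]
  field_simp
  ring

theorem integral_exp_mul_sub_deriv_mul_stdCdf (htT : t ≤ T) (hK : ContinuousOn K (Icc t T))
    (hK' : ∀ u ∈ Ioo t T, HasDerivAt K (K' u) u) (hK'int : IntervalIntegrable K' volume t T) :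
    ∫ u in t..T, exp (-r * (u - t)) * (r * K u - K' u) * stdCdf (c * √(u - t))
      = K t / 2 - exp (-r * (T - t)) * K T * stdCdf (c * √(T - t))
        + c / (2 * √(2 * π)) * ∫ u in t..T, exp (-(r + c ^ 2 / 2) * (u - t)) * K u / √(u - t) := by
  have hN : Continuous fun u => stdCdf (c * √(u - t)) := continuous_stdCdf.comp (by fun_prop)
  have hdiscounted : IntervalIntegrable
      (fun u => exp (-r * (u - t)) * (r * K u - K' u) * stdCdf (c * √(u - t))) volume t T := by
    have hKint : IntervalIntegrable K volume t T :=
      (hK.mono (uIcc_of_le htT).subset).intervalIntegrable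
    refine (((hKint.const_mul r).sub hK'int).continuousOn_mul
      (((by fun_prop : Continuous fun u => exp (-r * (u - t))).mul hN).continuousOn)).congr ?_
    intro u _
    simp only [Pi.mul_apply]
    ring
  have hsingular : IntervalIntegrable
      (fun u => exp (-(r + c ^ 2 / 2) * (u - t)) * K u / √(u - t)) volume t T :=
    intervalIntegrable_div_sqrt_sub htT ((Continuous.continuousOn (by fun_prop)).mul hK)
  have hFTC := intervalIntegral.integral_eq_sub_of_hasDeriv_right_of_le htT
    (((Continuous.continuousOn (by fun_prop)).mul hK).mul hN.continuousOn)
    (fun u hu => (hasDerivAt_exp_mul_stdCdf_mul_sqrt_sub hu.1 (hK' u hu)).hasDerivWithinAt)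
    ((hsingular.const_mul _).sub hdiscounted)
  rw [intervalIntegral.integral_sub (hsingular.const_mul _) hdiscounted,
    intervalIntegral.integral_const_mul] at hFTC
  simp only [Pi.mul_apply, sub_self, mul_zero, exp_zero, sqrt_zero, stdCdf_zero] at hFTC
  linear_combination -hFTC

end IntegrationByParts

lemma VeStrike_bndStrikeM {r σ T KT t : ℝ} (m : ℝ) (hσ : σ ≠ 0) (hKT : KT ≠ 0) (htT : t < T) :
    VeStrike r σ T KT t (bndStrikeM m r σ T KT t)
      = KT * exp (-r * (T - t)) * stdCdf (m / σ * √(T - t))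
        - bndStrikeM m r σ T KT t * stdCdf ((m / σ - σ) * √(T - t)) := by
  have hlog : log (KT / bndStrikeM m r σ T KT t) = (m + r - σ ^ 2 / 2) * (T - t) := by
    rw [bndStrikeM, div_mul_cancel_left₀ hKT, ← exp_neg, log_exp]
    ring
  have hsqrt : 0 < √(T - t) := sqrt_pos.2 (sub_pos.2 htT)
  have hτ : T - t = √(T - t) ^ 2 := (sq_sqrt (sub_pos.2 htT).le).symm
  rw [VeStrike, hlog]
  -- with `T - t = s ^ 2` for an opaque `s`, `field_simp` can clear the square roots
  generalize √(T - t) = s at hsqrt hτ ⊢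
  rw [hτ]
  congr 3 <;> field_simp <;> ring

theorem strike_linear_volterra_equivalence_general (r σ T KT m : ℝ)
    (hσ : 0 < σ) (hKT : 0 < KT)
    (K K' : ℝ → ℝ)
    (hKcont : ContinuousOn K (Set.Icc 0 T))
    (hKT' : K T = KT)
    (hKderiv : ∀ u ∈ Set.Ico 0 T, HasDerivAt K (K' u) u)
    (hint : IntegrableOn (fun u => Real.exp (-r * u) * K' u) (Set.Ioo 0 T)) :
    (∀ t, 0 ≤ t → t < T →
      K t - bndStrikeM m r σ T KT t
        = VeStrike r σ T KT t (bndStrikeM m r σ T KT t)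
          + ∫ u in t..T, Real.exp (-r * (u - t)) * (r * K u - K' u) *
              stdCdf (m / σ * Real.sqrt (u - t)))
    ↔
    (∀ t, 0 ≤ t → t < T →
      K t = 2 * KT * Real.exp (-(m + r - σ ^ 2 / 2) * (T - t)) *
              stdCdf (-(m / σ - σ) * Real.sqrt (T - t))
            + m / (σ * Real.sqrt (2 * Real.pi)) *
              ∫ u in t..T, Real.exp (-(r + m ^ 2 / (2 * σ ^ 2)) * (u - t)) * K u /
                Real.sqrt (u - t)) := by
  refine forall_congr' fun t => forall_congr' fun ht => forall_congr' fun htT => ?_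
  have hK'int : IntervalIntegrable K' volume t T := by
    refine IntervalIntegrable.of_exp_mul (c := -r) ?_
    rw [intervalIntegrable_iff_integrableOn_Ioo_of_le htT.le]
    exact hint.mono_set (Ioo_subset_Ioo_left ht)
  have hibp := integral_exp_mul_sub_deriv_mul_stdCdf (r := r) (c := m / σ) htT.le
    (hKcont.mono (Icc_subset_Icc_left ht))
    (fun u hu => hKderiv u ⟨ht.trans hu.1.le, hu.2⟩) hK'int
  rw [show (m / σ) ^ 2 / 2 = m ^ 2 / (2 * σ ^ 2) by ring, hKT'] at hibp
  rw [VeStrike_bndStrikeM m hσ.ne' hKT.ne' htT, neg_mul (m / σ - σ), stdCdf_neg, hibp]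
  unfold bndStrikeM
  constructor
  · intro h
    linear_combination 2 * h
  · intro h
    linear_combination h / 2

theorem strike_linear_volterra_equivalence (r σ T KT m : ℝ)
    (hr : 0 < r) (hσ : 0 < σ) (hT : 0 < T) (hKT : 0 < KT)
    (K K' : ℝ → ℝ)
    (hKcont : ContinuousOn K (Set.Icc 0 T))
    (hKT' : K T = KT)
    (hKderiv : ∀ u ∈ Set.Ico 0 T, HasDerivAt K (K' u) u)
    (hK'cont : ContinuousOn K' (Set.Ico 0 T))
    (hint : IntegrableOn (fun u => Real.exp (-r * u) * K' u) (Set.Ioo 0 T)) :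
    (∀ t, 0 ≤ t → t < T →
      K t - bndStrikeM m r σ T KT t
        = VeStrike r σ T KT t (bndStrikeM m r σ T KT t)
          + ∫ u in t..T, Real.exp (-r * (u - t)) * (r * K u - K' u) *
              stdCdf (m / σ * Real.sqrt (u - t)))
    ↔
    (∀ t, 0 ≤ t → t < T →
      K t = 2 * KT * Real.exp (-(m + r - σ ^ 2 / 2) * (T - t)) *
              stdCdf (-(m / σ - σ) * Real.sqrt (T - t))
            + m / (σ * Real.sqrt (2 * Real.pi)) *
              ∫ u in t..T, Real.exp (-(r + m ^ 2 / (2 * σ ^ 2)) * (u - t)) * K u /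
                Real.sqrt (u - t)) :=
  strike_linear_volterra_equivalence_general r σ T KT m hσ hKT K K' hKcont hKT' hKderiv hint
end
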